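/- Let z₁ ∈ ℂ with Im(z₁²) ≠ 0 and let Φ = (Φ₁,Φ₂)ᵀ : ℝ → ℂ² be nowhere zero. Define the Bäcklund maps B_q(q,Φ) and B_Φ(Φ) as in the Kaup–Newell Darboux transformation. Then applying the transformation twice returns the original potential: with q⁽¹⁾ = B_q(q,Φ) and Φ⁽¹⁾ = B_Φ(Φ), one has B_q(q⁽¹⁾, Φ⁽¹⁾) = q pointwise. -/

import Mathlib

open Complex

/-!
Both maps are governed by `D = z|Φ₁|² + z̄|Φ₂|²` and its conjugate `D̄ = z|Φ₂|² + z̄|Φ₁|²`.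
Since `|Φ⁽¹⁾₁| = |Φ₂|/|D|` and `|Φ⁽¹⁾₂| = |Φ₁|/|D|`, the corresponding quantities for `Φ⁽¹⁾`
are `D⁻¹` and `D̄⁻¹`, and with these the second application of `B_q` undoes the first by a
field identity in `D` and `D̄`.
-/

/-- The Bäcklund map on the potential:
`B_q(q,Φ) = ((z|Φ₂|²+\bar z|Φ₁|²)/(z|Φ₁|²+\bar z|Φ₂|²))²
  (-q + 2i(z²-\bar z²) Φ₁ \barΦ₂ / (z|Φ₂|²+\bar z|Φ₁|²))`. -/
noncomputable def Bq (z q Φ₁ Φ₂ : ℂ) : ℂ :=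
  ((z * (‖Φ₂‖ : ℂ) ^ 2 + (starRingEnd ℂ) z * (‖Φ₁‖ : ℂ) ^ 2) /
    (z * (‖Φ₁‖ : ℂ) ^ 2 + (starRingEnd ℂ) z * (‖Φ₂‖ : ℂ) ^ 2)) ^ 2 *
  (-q + 2 * Complex.I * (z ^ 2 - ((starRingEnd ℂ) z) ^ 2) * Φ₁ * (starRingEnd ℂ) Φ₂ /
      (z * (‖Φ₂‖ : ℂ) ^ 2 + (starRingEnd ℂ) z * (‖Φ₁‖ : ℂ) ^ 2))

/-- First component of the Bäcklund map on the eigenvector. -/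
noncomputable def BPhi1 (z Φ₁ Φ₂ : ℂ) : ℂ :=
  (starRingEnd ℂ) Φ₂ / (z * (‖Φ₁‖ : ℂ) ^ 2 + (starRingEnd ℂ) z * (‖Φ₂‖ : ℂ) ^ 2)

/-- Second component of the Bäcklund map on the eigenvector. -/
noncomputable def BPhi2 (z Φ₁ Φ₂ : ℂ) : ℂ :=
  (starRingEnd ℂ) Φ₁ / ((starRingEnd ℂ) z * (‖Φ₁‖ : ℂ) ^ 2 + z * (‖Φ₂‖ : ℂ) ^ 2)

open ComplexConjugate

noncomputable def backlundDenom (z Φ₁ Φ₂ : ℂ) : ℂ :=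
  z * (‖Φ₁‖ : ℂ) ^ 2 + conj z * (‖Φ₂‖ : ℂ) ^ 2

lemma Bq_eq_backlundDenom (z q Φ₁ Φ₂ : ℂ) :
    Bq z q Φ₁ Φ₂ = (backlundDenom z Φ₂ Φ₁ / backlundDenom z Φ₁ Φ₂) ^ 2 *
      (-q + 2 * I * (z ^ 2 - conj z ^ 2) * Φ₁ * conj Φ₂ / backlundDenom z Φ₂ Φ₁) :=
  rfl

lemma BPhi1_eq_backlundDenom (z Φ₁ Φ₂ : ℂ) :
    BPhi1 z Φ₁ Φ₂ = conj Φ₂ / backlundDenom z Φ₁ Φ₂ :=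
  rfl

lemma conj_backlundDenom (z Φ₁ Φ₂ : ℂ) :
    conj (backlundDenom z Φ₁ Φ₂) = backlundDenom z Φ₂ Φ₁ := by
  simp only [backlundDenom, map_add, map_mul, map_pow, conj_conj, conj_ofReal]
  ring

lemma BPhi2_eq_conj (z Φ₁ Φ₂ : ℂ) :
    BPhi2 z Φ₁ Φ₂ = conj (Φ₁ / backlundDenom z Φ₁ Φ₂) := by
  rw [map_div₀, conj_backlundDenom, BPhi2, backlundDenom, add_comm]

lemma eq_zero_of_mul_add_conj_mul_eq_zero {z : ℂ} (hz : (z ^ 2).im ≠ 0) {a b : ℝ}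
    (h : z * a + conj z * b = 0) : a = 0 ∧ b = 0 := by
  have hz0 : z ≠ 0 := by rintro rfl; simp at hz
  -- multiplying by `z` makes the second summand real
  have key : z ^ 2 * a + ((‖z‖ ^ 2 * b : ℝ) : ℂ) = 0 := by
    push_cast
    rw [← mul_conj', ← mul_zero z, ← h]
    ring
  have ha : a = 0 := by
    simpa only [add_im, im_mul_ofReal, ofReal_im, zero_im, add_zero, mul_eq_zero, hz,
      false_or] using congrArg im key
  refine ⟨ha, ?_⟩
  simpa [ha, hz0] using key

lemma backlundDenom_ne_zero {z : ℂ} (hz : (z ^ 2).im ≠ 0) {Φ₁ Φ₂ : ℂ}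
    (hΦ : ¬(Φ₁ = 0 ∧ Φ₂ = 0)) : backlundDenom z Φ₁ Φ₂ ≠ 0 := by
  intro h
  rw [backlundDenom, ← ofReal_pow, ← ofReal_pow] at h
  exact hΦ (by simpa using eq_zero_of_mul_add_conj_mul_eq_zero hz h)

lemma backlundDenom_BPhi (z Φ₁ Φ₂ : ℂ) :
    backlundDenom z (BPhi1 z Φ₁ Φ₂) (BPhi2 z Φ₁ Φ₂) = (backlundDenom z Φ₁ Φ₂)⁻¹ := by
  rw [inv_def, normSq_eq_norm_sq, conj_backlundDenom, BPhi2_eq_conj, BPhi1_eq_backlundDenom]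
  simp only [backlundDenom, norm_conj, norm_div]
  push_cast
  ring

lemma backlundDenom_BPhi_swap (z Φ₁ Φ₂ : ℂ) :
    backlundDenom z (BPhi2 z Φ₁ Φ₂) (BPhi1 z Φ₁ Φ₂) = (backlundDenom z Φ₂ Φ₁)⁻¹ := by
  rw [← conj_backlundDenom, backlundDenom_BPhi, map_inv₀, conj_backlundDenom]

/-- The Bäcklund transformation is an involution on the potential. -/
theorem backlund_involution (z₁ : ℂ) (hz₁ : (z₁ ^ 2).im ≠ 0)
    (q Φ₁ Φ₂ : ℝ → ℂ) (hnz : ∀ x : ℝ, ¬(Φ₁ x = 0 ∧ Φ₂ x = 0)) :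
    ∀ x : ℝ,
      Bq z₁ (Bq z₁ (q x) (Φ₁ x) (Φ₂ x))
        (BPhi1 z₁ (Φ₁ x) (Φ₂ x)) (BPhi2 z₁ (Φ₁ x) (Φ₂ x)) = q x := by
  intro x
  have hD₁ := backlundDenom_ne_zero hz₁ (hnz x)
  have hD₂ := backlundDenom_ne_zero hz₁ (fun h => hnz x h.symm)
  rw [Bq_eq_backlundDenom, backlundDenom_BPhi, backlundDenom_BPhi_swap, Bq_eq_backlundDenom,
    BPhi1_eq_backlundDenom, BPhi2_eq_conj, conj_conj]
  field_simp
  ring
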